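/- arXiv:1510.01816 — 2 statements merged into one kernel-verified Lean document; each statement's English description precedes it below -/
import Mathlib

section
/- If (τ*, ε*) is an optimal point of problem (P2) and ε_S* > 0 for some index 0 ≤ S ≤ K, then ε_i* = τ_i*·P_P for every index 0 ≤ i ≤ S−1. -/
/-- The rate function `r(t,x) = t·log(1 + x/t)` for `t > 0`, and `r(0,x) = 0`. -/
noncomputable def rate (t x : ℝ) : ℝ := if 0 < t then t * Real.log (1 + x / t) else 0

/-- The feasible set of problem (P2): `τ_i ≥ 0`, `0 ≤ ε_i ≤ τ_i·P_P` for `0 ≤ i ≤ K`,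
`Σ ε_i ≤ P_A` and `Σ τ_i ≤ 1`. -/
def FeasibleP2 (K : ℕ) (PA PP : ℝ) (τ ε : ℕ → ℝ) : Prop :=
  (∀ i ≤ K, 0 ≤ τ i) ∧ (∀ i ≤ K, 0 ≤ ε i ∧ ε i ≤ τ i * PP) ∧
  (∑ i ∈ Finset.range (K + 1), ε i ≤ PA) ∧ (∑ i ∈ Finset.range (K + 1), τ i ≤ 1)

/-- The objective of problem (P2): `R(τ,ε) = Σ_{i=1}^K r(τ_i, γ_i·Σ_{j=0}^{i−1} ε_j)`. -/
noncomputable def ObjP2 (K : ℕ) (γ τ ε : ℕ → ℝ) : ℝ :=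
  ∑ i ∈ Finset.Icc 1 K, rate (τ i) (γ i * ∑ j ∈ Finset.range i, ε j)

/-
Suppose `ε_i < τ_i·P_P` for some `i < S`. Moving a small amount `δ` of energy from slot `S` to
slot `i` keeps the point feasible and leaves every prefix sum `Σ_{j<m} ε_j` unchanged except
for `i < m ≤ S`, where it grows by `δ`. Since `r(t, ·)` is increasing, and strictly so for
`t > 0`, the objective does not decrease, and the `S`-th term strictly increases because
`ε_S > 0` forces `τ_S > 0`. This contradicts optimality.
-/

open Finset

lemma rate_le_rate {t x y : ℝ} (hx : 0 ≤ x) (hxy : x ≤ y) : rate t x ≤ rate t y := by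
  unfold rate
  split_ifs with ht
  · have hpos : 0 < 1 + x / t := by positivity
    gcongr
  · rfl

lemma rate_lt_rate {t x y : ℝ} (ht : 0 < t) (hx : 0 ≤ x) (hxy : x < y) :
    rate t x < rate t y := by
  simp only [rate, if_pos ht]
  have hpos : 0 < 1 + x / t := by positivity
  gcongr

lemma ObjP2_lt_ObjP2 {K S : ℕ} {γ τ ε ε' : ℕ → ℝ} (hγ : ∀ m ∈ Icc 1 K, 0 ≤ γ m)
    (hε : ∀ m ∈ Icc 1 K, 0 ≤ ∑ j ∈ range m, ε j)
    (hle : ∀ m ∈ Icc 1 K, ∑ j ∈ range m, ε j ≤ ∑ j ∈ range m, ε' j)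
    (hS : S ∈ Icc 1 K) (hτS : 0 < τ S) (hγS : 0 < γ S)
    (hlt : ∑ j ∈ range S, ε j < ∑ j ∈ range S, ε' j) :
    ObjP2 K γ τ ε < ObjP2 K γ τ ε' := by
  refine sum_lt_sum (fun m hm => ?_) ⟨S, hS, ?_⟩
  · exact rate_le_rate (mul_nonneg (hγ m hm) (hε m hm))
      (mul_le_mul_of_nonneg_left (hle m hm) (hγ m hm))
  · exact rate_lt_rate hτS (mul_nonneg hγS.le (hε S hS)) (by gcongr)

def moveEnergy (ε : ℕ → ℝ) (S i : ℕ) (δ : ℝ) : ℕ → ℝ :=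
  ε + Pi.single i δ - Pi.single S δ

section moveEnergy

variable {ε : ℕ → ℝ} {S i m : ℕ} {δ : ℝ}

lemma sum_range_moveEnergy :
    ∑ j ∈ range m, moveEnergy ε S i δ j =
      ∑ j ∈ range m, ε j + ((if i < m then δ else 0) - if S < m then δ else 0) := by
  simp [moveEnergy, sum_add_distrib, sum_sub_distrib, add_sub_assoc]

lemma sum_range_le_sum_range_moveEnergy (hiS : i ≤ S) (hδ : 0 ≤ δ) (m : ℕ) :
    ∑ j ∈ range m, ε j ≤ ∑ j ∈ range m, moveEnergy ε S i δ j := by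
  rw [sum_range_moveEnergy]
  split_ifs <;> linarith

lemma sum_range_lt_sum_range_moveEnergy (hiS : i < S) (hδ : 0 < δ) :
    ∑ j ∈ range S, ε j < ∑ j ∈ range S, moveEnergy ε S i δ j := by
  simp only [sum_range_moveEnergy, if_pos hiS, lt_irrefl, if_false]
  linarith

lemma sum_range_moveEnergy_of_lt (hi : i < m) (hS : S < m) :
    ∑ j ∈ range m, moveEnergy ε S i δ j = ∑ j ∈ range m, ε j := by
  simp [sum_range_moveEnergy, hi, hS]

end moveEnergy

namespace FeasibleP2

variable {K : ℕ} {PA PP : ℝ} {τ ε : ℕ → ℝ}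

lemma sum_range_nonneg (h : FeasibleP2 K PA PP τ ε) {m : ℕ} (hm : m ≤ K + 1) :
    0 ≤ ∑ j ∈ range m, ε j :=
  sum_nonneg fun j hj => (h.2.1 j (by rw [mem_range] at hj; omega)).1

lemma time_pos_of_energy_pos (h : FeasibleP2 K PA PP τ ε) {S : ℕ} (hS : S ≤ K) (hεS : 0 < ε S) :
    0 < τ S := by
  have hτS := h.1 S hS
  have hετ := (h.2.1 S hS).2
  by_contra! hτS'
  have : τ S = 0 := le_antisymm hτS' hτS
  rw [this, zero_mul] at hετ
  linarith

lemma moveEnergy (h : FeasibleP2 K PA PP τ ε) {S i : ℕ} {δ : ℝ} (hS : S ≤ K) (hi : i ≤ K)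
    (hiS : i ≠ S) (hδ : 0 ≤ δ) (hδS : δ ≤ ε S) (hδi : ε i + δ ≤ τ i * PP) :
    FeasibleP2 K PA PP τ (moveEnergy ε S i δ) := by
  obtain ⟨hτ, hε, hεsum, hτsum⟩ := h
  refine ⟨hτ, fun j hj => ?_, ?_, hτsum⟩
  · have hεj := hε j hj
    rcases eq_or_ne j i with rfl | hji
    · simp only [_root_.moveEnergy, Pi.sub_apply, Pi.add_apply, Pi.single_eq_same,
        Pi.single_eq_of_ne hiS, sub_zero]
      constructor <;> linarith
    rcases eq_or_ne j S with rfl | hjS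
    · simp only [_root_.moveEnergy, Pi.sub_apply, Pi.add_apply, Pi.single_eq_same,
        Pi.single_eq_of_ne hji, add_zero]
      constructor <;> linarith
    · simpa [_root_.moveEnergy, Pi.single_eq_of_ne hji, Pi.single_eq_of_ne hjS] using hεj
  · rwa [sum_range_moveEnergy_of_lt (by omega) (by omega)]

end FeasibleP2

theorem stmt3_general (K : ℕ) (γ : ℕ → ℝ)
    (hγ : ∀ i, 1 ≤ i → i ≤ K → 0 < γ i)
    (PA PP : ℝ)
    (τ ε : ℕ → ℝ) (hfeas : FeasibleP2 K PA PP τ ε)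
    (hopt : ∀ τ' ε' : ℕ → ℝ, FeasibleP2 K PA PP τ' ε' →
      ObjP2 K γ τ' ε' ≤ ObjP2 K γ τ ε)
    (S : ℕ) (hS : S ≤ K) (hεS : 0 < ε S) :
    ∀ i < S, ε i = τ i * PP := by
  intro i hiS
  by_contra hne
  have hεi : ε i < τ i * PP := lt_of_le_of_ne (hfeas.2.1 i (by omega)).2 hne
  set δ := min (ε S) (τ i * PP - ε i)
  have hδ : 0 < δ := lt_min hεS (by linarith)
  have hfeas' : FeasibleP2 K PA PP τ (moveEnergy ε S i δ) :=
    hfeas.moveEnergy hS (by omega) hiS.ne hδ.le (min_le_left _ _)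
      (by linarith [min_le_right (ε S) (τ i * PP - ε i)])
  have hgain : ObjP2 K γ τ ε < ObjP2 K γ τ (moveEnergy ε S i δ) := by
    refine ObjP2_lt_ObjP2 (fun m hm => ?_) (fun m hm => ?_)
      (fun m _ => sum_range_le_sum_range_moveEnergy hiS.le hδ.le m) (mem_Icc.2 ⟨by omega, hS⟩)
      (hfeas.time_pos_of_energy_pos hS hεS) (hγ S (by omega) hS) (sum_range_lt_sum_range_moveEnergy hiS hδ)
    · exact (hγ m (mem_Icc.1 hm).1 (mem_Icc.1 hm).2).le
    · exact hfeas.sum_range_nonneg (by linarith [(mem_Icc.1 hm).2])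
  exact (hopt τ _ hfeas').not_gt hgain

/-- If `(τ*, ε*)` is optimal for (P2) and `ε_S* > 0` for some `0 ≤ S ≤ K`, then
`ε_i* = τ_i*·P_P` for every `0 ≤ i ≤ S−1`. -/
theorem stmt3 (K : ℕ) (hK : 1 ≤ K) (γ : ℕ → ℝ)
    (hγ : ∀ i, 1 ≤ i → i ≤ K → 0 < γ i)
    (PA PP : ℝ) (hPA : 0 < PA) (hPP : PA < PP)
    (τ ε : ℕ → ℝ) (hfeas : FeasibleP2 K PA PP τ ε)
    (hopt : ∀ τ' ε' : ℕ → ℝ, FeasibleP2 K PA PP τ' ε' →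
      ObjP2 K γ τ' ε' ≤ ObjP2 K γ τ ε)
    (S : ℕ) (hS : S ≤ K) (hεS : 0 < ε S) :
    ∀ i < S, ε i = τ i * PP :=
  stmt3_general K γ hγ PA PP τ ε hfeas hopt S hS hεS
end

section
/- The point τ* given by τ_i* = S·γ_i / (Σ_{j=1}^n γ_j) lies in the feasible set and maximizes G over it, and the maximum value equals S·log(1 + P_A·(Σ_{j=1}^n γ_j)/S). -/
/-- The objective `G(τ) = Σ_{i=1}^n r(τ_i, γ_i·P_A)`. -/
noncomputable def ObjG (n : ℕ) (γ : ℕ → ℝ) (PA : ℝ) (τ : ℕ → ℝ) : ℝ :=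
  ∑ i ∈ Finset.Icc 1 n, rate (τ i) (γ i * PA)

/-- The feasible set: `τ_i ≥ 0` for `1 ≤ i ≤ n` and `Σ_{i=1}^n τ_i ≤ S`. -/
def FeasibleG (n : ℕ) (S : ℝ) (τ : ℕ → ℝ) : Prop :=
  (∀ i, 1 ≤ i → i ≤ n → 0 ≤ τ i) ∧ ∑ i ∈ Finset.Icc 1 n, τ i ≤ S

/-!
`rate t x = t · log (1 + x / t)` is the perspective of the concave function `log (1 + ·)`, so it
is positively homogeneous and jointly concave, hence superadditive on the nonnegative quadrant.
Superadditivity bounds `G(τ)` by `rate (Σ τᵢ) (P_A Σ γᵢ)`, which is monotone in the first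
argument and so at most `rate S (P_A Σ γᵢ)`; by homogeneity `τ*`, being proportional to `γ`,
attains this bound.
-/

open Finset

lemma rate_of_pos {t : ℝ} (ht : 0 < t) (x : ℝ) : rate t x = t * Real.log (1 + x / t) := by
  simp [rate, ht]

lemma rate_zero_left (x : ℝ) : rate 0 x = 0 := by simp [rate]

lemma rate_zero_right (t : ℝ) : rate t 0 = 0 := by simp [rate]

lemma rate_mul_mul {c : ℝ} (hc : 0 ≤ c) (t x : ℝ) : rate (c * t) (c * x) = c * rate t x := by
  rcases hc.eq_or_lt with rfl | hc
  · simp [rate_zero_left]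
  by_cases ht : 0 < t
  · rw [rate_of_pos ht, rate_of_pos (mul_pos hc ht), mul_div_mul_left _ _ hc.ne', mul_assoc]
  · simp [rate, ht, (mul_pos_iff_of_pos_left hc).not.mpr ht]

lemma rate_le_rate_right {t x₁ x₂ : ℝ} (hx₁ : 0 ≤ x₁) (h : x₁ ≤ x₂) : rate t x₁ ≤ rate t x₂ := by
  by_cases ht : 0 < t
  · rw [rate_of_pos ht, rate_of_pos ht]
    gcongr
  · simp [rate, ht]

lemma rate_add_rate_le {t₁ t₂ x₁ x₂ : ℝ} (ht₁ : 0 ≤ t₁) (ht₂ : 0 ≤ t₂)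
    (hx₁ : 0 ≤ x₁) (hx₂ : 0 ≤ x₂) :
    rate t₁ x₁ + rate t₂ x₂ ≤ rate (t₁ + t₂) (x₁ + x₂) := by
  rcases ht₁.eq_or_lt with rfl | ht₁
  · simpa [rate_zero_left] using rate_le_rate_right hx₂ (le_add_of_nonneg_left hx₁)
  rcases ht₂.eq_or_lt with rfl | ht₂
  · simpa [rate_zero_left] using rate_le_rate_right hx₁ (le_add_of_nonneg_right hx₂)
  set T := t₁ + t₂ with hT_def
  have hT : 0 < T := add_pos ht₁ ht₂
  have jensen := strictConcaveOn_log_Ioi.concaveOn.2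
    (show 1 + x₁ / t₁ ∈ Set.Ioi 0 by simp only [Set.mem_Ioi]; positivity)
    (show 1 + x₂ / t₂ ∈ Set.Ioi 0 by simp only [Set.mem_Ioi]; positivity)
    (div_nonneg ht₁.le hT.le) (div_nonneg ht₂.le hT.le)
    (by rw [← add_div, div_self hT.ne'])
  have hmean : t₁ / T * (1 + x₁ / t₁) + t₂ / T * (1 + x₂ / t₂) = 1 + (x₁ + x₂) / T := by
    field_simp
    ring
  simp only [smul_eq_mul, hmean] at jensen
  rw [rate_of_pos ht₁, rate_of_pos ht₂, rate_of_pos hT]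
  calc t₁ * Real.log (1 + x₁ / t₁) + t₂ * Real.log (1 + x₂ / t₂)
      = T * (t₁ / T * Real.log (1 + x₁ / t₁) + t₂ / T * Real.log (1 + x₂ / t₂)) := by
        field_simp
    _ ≤ T * Real.log (1 + (x₁ + x₂) / T) := mul_le_mul_of_nonneg_left jensen hT.le

lemma rate_le_rate_left {t₁ t₂ x : ℝ} (ht₁ : 0 ≤ t₁) (h : t₁ ≤ t₂) (hx : 0 ≤ x) :
    rate t₁ x ≤ rate t₂ x := by
  simpa [rate_zero_right] using rate_add_rate_le ht₁ (sub_nonneg.2 h) hx le_rfl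

lemma sum_rate_le_rate_sum {ι : Type*} (s : Finset ι) {t x : ι → ℝ}
    (ht : ∀ i ∈ s, 0 ≤ t i) (hx : ∀ i ∈ s, 0 ≤ x i) :
    ∑ i ∈ s, rate (t i) (x i) ≤ rate (∑ i ∈ s, t i) (∑ i ∈ s, x i) := by
  induction s using Finset.cons_induction with
  | empty => simp [rate_zero_left]
  | cons a s ha ih =>
    simp only [Finset.forall_mem_cons] at ht hx
    simp only [Finset.sum_cons]
    calc rate (t a) (x a) + ∑ i ∈ s, rate (t i) (x i)
        ≤ rate (t a) (x a) + rate (∑ i ∈ s, t i) (∑ i ∈ s, x i) := by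
          gcongr
          exact ih ht.2 hx.2
      _ ≤ rate (t a + ∑ i ∈ s, t i) (x a + ∑ i ∈ s, x i) :=
          rate_add_rate_le ht.1 (sum_nonneg ht.2) hx.1 (sum_nonneg hx.2)

lemma sum_rate_mul_mul {ι : Type*} (s : Finset ι) {c : ι → ℝ} (hc : ∀ i ∈ s, 0 ≤ c i)
    (t x : ℝ) :
    ∑ i ∈ s, rate (c i * t) (c i * x) = rate ((∑ i ∈ s, c i) * t) ((∑ i ∈ s, c i) * x) := by
  rw [rate_mul_mul (sum_nonneg hc), sum_mul]
  exact sum_congr rfl fun i hi => rate_mul_mul (hc i hi) t x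

lemma objG_le_of_feasibleG {n : ℕ} {γ : ℕ → ℝ} (hγ : ∀ i ∈ Icc 1 n, 0 ≤ γ i) {PA S : ℝ}
    (hPA : 0 ≤ PA) {τ : ℕ → ℝ} (hτ : FeasibleG n S τ) :
    ObjG n γ PA τ ≤ rate S ((∑ i ∈ Icc 1 n, γ i) * PA) := by
  obtain ⟨hτ_nonneg, hτ_sum⟩ := hτ
  have hτ_nonneg' : ∀ i ∈ Icc 1 n, 0 ≤ τ i := fun i hi =>
    hτ_nonneg i (mem_Icc.1 hi).1 (mem_Icc.1 hi).2
  calc ObjG n γ PA τ ≤ rate (∑ i ∈ Icc 1 n, τ i) (∑ i ∈ Icc 1 n, γ i * PA) :=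
        sum_rate_le_rate_sum _ hτ_nonneg' fun i hi => mul_nonneg (hγ i hi) hPA
    _ = rate (∑ i ∈ Icc 1 n, τ i) ((∑ i ∈ Icc 1 n, γ i) * PA) := by rw [sum_mul]
    _ ≤ rate S ((∑ i ∈ Icc 1 n, γ i) * PA) :=
        rate_le_rate_left (sum_nonneg hτ_nonneg') hτ_sum
          (mul_nonneg (sum_nonneg hγ) hPA)

lemma objG_mul_const {n : ℕ} {γ : ℕ → ℝ} (hγ : ∀ i ∈ Icc 1 n, 0 ≤ γ i) (PA c : ℝ) :
    ObjG n γ PA (fun i => γ i * c) =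
      rate ((∑ i ∈ Icc 1 n, γ i) * c) ((∑ i ∈ Icc 1 n, γ i) * PA) :=
  sum_rate_mul_mul _ hγ c PA

/-- The point `τ_i* = S·γ_i / (Σ_{j=1}^n γ_j)` is feasible, maximizes `G` over the
feasible set, and the maximum value equals `S·log(1 + P_A·(Σ_{j=1}^n γ_j)/S)`. -/
theorem stmt5 (n : ℕ) (hn : 1 ≤ n) (γ : ℕ → ℝ)
    (hγ : ∀ i, 1 ≤ i → i ≤ n → 0 < γ i)
    (PA S : ℝ) (hPA : 0 < PA) (hS : 0 < S) :
    FeasibleG n S (fun i => S * γ i / ∑ j ∈ Finset.Icc 1 n, γ j) ∧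
    (∀ τ : ℕ → ℝ, FeasibleG n S τ →
      ObjG n γ PA τ ≤ ObjG n γ PA (fun i => S * γ i / ∑ j ∈ Finset.Icc 1 n, γ j)) ∧
    ObjG n γ PA (fun i => S * γ i / ∑ j ∈ Finset.Icc 1 n, γ j) =
      S * Real.log (1 + PA * (∑ j ∈ Finset.Icc 1 n, γ j) / S) := by
  set Γ := ∑ j ∈ Icc 1 n, γ j
  have hγ' : ∀ i ∈ Icc 1 n, 0 < γ i := fun i hi => hγ i (mem_Icc.1 hi).1 (mem_Icc.1 hi).2
  have hΓ : 0 < Γ := sum_pos hγ' ⟨1, mem_Icc.2 ⟨le_rfl, hn⟩⟩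
  have hτ_opt : (fun i => S * γ i / Γ) = fun i => γ i * (S / Γ) := by
    funext i
    ring
  have hvalue : ObjG n γ PA (fun i => S * γ i / Γ) = rate S (Γ * PA) := by
    rw [hτ_opt, objG_mul_const (fun i hi => (hγ' i hi).le), mul_div_cancel₀ _ hΓ.ne']
  refine ⟨⟨fun i h₁ h₂ => by have := hγ i h₁ h₂; positivity, ?_⟩,
    fun τ hτ => hvalue ▸ objG_le_of_feasibleG (fun i hi => (hγ' i hi).le) hPA.le hτ, ?_⟩
  · rw [hτ_opt, ← sum_mul, mul_div_cancel₀ _ hΓ.ne']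
  · rw [hvalue, rate_of_pos hS, mul_comm Γ]
end
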